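/- Let G be a finite directed multigraph with no directed cycles, and let M = (I − A)^{-1} be its weighted path matrix over ℤ[[x_e : e ∈ E]] (whose entries are polynomials, since an acyclic finite graph has only finitely many paths between any two vertices). Then for any ordered k-subsets A = {a_1, …, a_k}, B = {b_1, …, b_k} of the vertices, the minor Δ_{A,B}(M) equals Σ_{P ∈ 𝒫_{A,B}(G)} sgn(P) wt(P), the signed sum over all collections P = (P_1, …, P_k) of pairwise vertex-disjoint directed paths with P_i : a_i ⇝ b_{π(i)} for some π ∈ S_k (the Lindström–Gessel–Viennot lemma). -/

import Mathlib

/-! Since `G` is acyclic, its adjacency matrix is nilpotent, so `(1 - A)⁻¹ = ∑_{m < n} A ^ m`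
and the `(i, j)` entry of `(1 - A)⁻¹` is the weight enumerator of the finitely many walks
`i ⇝ j`. Expanding the minor therefore gives the signed weight of all pairs `(σ, P)` of a
permutation and a tuple of walks `P i : a i ⇝ b (σ i)`. On the tuples whose walks meet,
exchanging the tails of the first and last walk through the least shared vertex is a
weight-preserving, sign-reversing involution: it keeps the multiset of visited vertices, hence
that vertex and the walks through it, unchanged. Only the vertex-disjoint tuples survive. -/

open MvPowerSeries

noncomputable section

namespace PathMatrix

variable {n k : ℕ} {E : Type} [Fintype E]

/-- `IsWalkFrom src tgt u v l` : the list of edges `l` forms a directed walk (path)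
from vertex `u` to vertex `v`, traversing the edges head-to-tail. -/
def IsWalkFrom (src tgt : E → Fin n) : Fin n → Fin n → List E → Prop
  | u, v, [] => u = v
  | u, v, e :: l => src e = u ∧ IsWalkFrom src tgt (tgt e) v l

/-- The weight of a path: the product of the variables of its edges (with multiplicity). -/
def pathWt (l : List E) : MvPowerSeries E ℤ :=
  (l.map fun e => (X e : MvPowerSeries E ℤ)).prod

/-- The weighted adjacency matrix. -/
def adjMat (src tgt : E → Fin n) : Matrix (Fin n) (Fin n) (MvPowerSeries E ℤ) :=
  fun i j => ∑ e : E, if src e = i ∧ tgt e = j then (X e : MvPowerSeries E ℤ) else 0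

/-- The list of vertices visited by a walk starting at `u` with edge list `l`. -/
def walkVerts (tgt : E → Fin n) (u : Fin n) (l : List E) : List (Fin n) :=
  u :: l.map tgt

/-- A self-avoiding cycle, recorded as a list of edges starting (canonically) at the
least vertex it visits. -/
def IsCycleMin (src tgt : E → Fin n) (l : List E) : Prop :=
  l ≠ [] ∧ ∃ v : Fin n, IsWalkFrom src tgt v v l ∧ (l.map src).Nodup ∧
    ∀ u ∈ l.map src, v ≤ u

/-- `𝒞(G)`: collections of pairwise vertex-disjoint self-avoiding cycles. -/
def CycColls (src tgt : E → Fin n) : Set (Finset (List E)) :=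
  {C | (∀ l ∈ C, IsCycleMin src tgt l) ∧
    ∀ l ∈ C, ∀ l' ∈ C, l ≠ l' → ∀ v ∈ l.map src, v ∉ l'.map src}

/-- The weight of a cycle collection. -/
def cycWt (C : Finset (List E)) : MvPowerSeries E ℤ := ∏ l ∈ C, pathWt l

/-- The sign of a cycle collection, `(-1)^{number of cycles}`. -/
def cycSgn (C : Finset (List E)) : ℤ := (-1) ^ C.card

/-- Membership in `𝒫̃_{A,B,π}(G)`. -/
def TuplePaths (src tgt : E → Fin n) (a b : Fin k → Fin n)
    (π : Equiv.Perm (Fin k)) (P : Fin k → List E) : Prop :=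
  ∀ i, IsWalkFrom src tgt (a i) (b (π i)) (P i)

/-- Membership in `𝒫_{A,B,π}(G)`: self-avoiding, pairwise vertex-disjoint paths. -/
def IsSystem (src tgt : E → Fin n) (a b : Fin k → Fin n)
    (π : Equiv.Perm (Fin k)) (P : Fin k → List E) : Prop :=
  TuplePaths src tgt a b π P ∧
  (∀ i, (walkVerts tgt (a i) (P i)).Nodup) ∧
  ∀ i j, i ≠ j → ∀ v ∈ walkVerts tgt (a i) (P i), v ∉ walkVerts tgt (a j) (P j)

/-- `ℱ_{A,B}(G)`: self-avoiding flows `(π, P, C)`. -/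
def Flows (src tgt : E → Fin n) (a b : Fin k → Fin n) :
    Set (Equiv.Perm (Fin k) × (Fin k → List E) × Finset (List E)) :=
  {F | IsSystem src tgt a b F.1 F.2.1 ∧ F.2.2 ∈ CycColls src tgt ∧
    ∀ i, ∀ v ∈ walkVerts tgt (a i) (F.2.1 i), ∀ l ∈ F.2.2, v ∉ l.map src}

/-- The weight of a path collection. -/
def colWt (P : Fin k → List E) : MvPowerSeries E ℤ := ∏ i, pathWt (P i)

/-- The sign and weight of a flow. -/
def flowSgn (F : Equiv.Perm (Fin k) × (Fin k → List E) × Finset (List E)) : ℤ :=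
  (Equiv.Perm.sign F.1 : ℤ) * cycSgn F.2.2

def flowWt (F : Equiv.Perm (Fin k) × (Fin k → List E) × Finset (List E)) :
    MvPowerSeries E ℤ :=
  colWt F.2.1 * cycWt F.2.2

/-- The product (coefficientwise) topology on formal power series, with `ℤ` discrete. -/
instance : TopologicalSpace (MvPowerSeries E ℤ) :=
  inferInstanceAs (TopologicalSpace ((E →₀ ℕ) → ℤ))

end PathMatrix

theorem List.idxOf_take_idxOf_succ {α : Type*} [DecidableEq α] (l : List α) (x : α) :
    (l.take (l.idxOf x + 1)).idxOf x = l.idxOf x := by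
  induction l with
  | nil => simp
  | cons y l ih => by_cases h : y = x <;> simp_all

theorem List.mem_take_idxOf_succ {α : Type*} [DecidableEq α] {l : List α} {x : α}
    (h : x ∈ l) : x ∈ l.take (l.idxOf x + 1) := by
  induction l with
  | nil => simp at h
  | cons y l ih =>
    by_cases hy : y = x
    · simp [hy]
    · simp_all [List.idxOf_cons_ne _ hy, Ne.symm hy]

namespace PathMatrix

open Finset

variable {n k : ℕ} {E : Type}

def IsAcyclic (src tgt : E → Fin n) : Prop :=
  ∀ (v : Fin n) (l : List E), IsWalkFrom src tgt v v l → l = []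

section Walks

variable {src tgt : E → Fin n} {u v w : Fin n} {l l₁ l₂ : List E}

@[simp] theorem walkVerts_cons (e : E) :
    walkVerts tgt u (e :: l) = u :: walkVerts tgt (tgt e) l := rfl

theorem pathWt_append (l₁ l₂ : List E) : pathWt (l₁ ++ l₂) = pathWt l₁ * pathWt l₂ := by
  simp [pathWt]

theorem IsWalkFrom.append (h₁ : IsWalkFrom src tgt u v l₁) (h₂ : IsWalkFrom src tgt v w l₂) :
    IsWalkFrom src tgt u w (l₁ ++ l₂) := by
  induction l₁ generalizing u with
  | nil => cases h₁; exact h₂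
  | cons e l ih => exact ⟨h₁.1, ih h₁.2⟩

theorem IsWalkFrom.take_drop_idxOf (h : IsWalkFrom src tgt u w l)
    (hv : v ∈ walkVerts tgt u l) :
    IsWalkFrom src tgt u v (l.take ((walkVerts tgt u l).idxOf v)) ∧
      IsWalkFrom src tgt v w (l.drop ((walkVerts tgt u l).idxOf v)) := by
  induction l generalizing u with
  | nil =>
    obtain rfl : v = u := by simpa [walkVerts] using hv
    simpa [walkVerts, IsWalkFrom] using h
  | cons e l ih =>
    by_cases hvu : u = v
    · subst hvu
      simpa [IsWalkFrom] using h
    · rw [walkVerts_cons, List.idxOf_cons_ne _ hvu]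
      have := ih h.2 (by simpa [Ne.symm hvu] using hv)
      exact ⟨⟨h.1, this.1⟩, this.2⟩

theorem IsWalkFrom.nodup_walkVerts (hG : IsAcyclic src tgt) (h : IsWalkFrom src tgt u w l) :
    (walkVerts tgt u l).Nodup := by
  induction l generalizing u with
  | nil => simp [walkVerts]
  | cons e l ih =>
    rw [walkVerts_cons, List.nodup_cons]
    refine ⟨fun hu => ?_, ih h.2⟩
    have hcycle : IsWalkFrom src tgt u u (e :: _) := ⟨h.1, (h.2.take_drop_idxOf hu).1⟩
    exact List.cons_ne_nil _ _ (hG u _ hcycle)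

theorem IsWalkFrom.length_lt (hG : IsAcyclic src tgt) (h : IsWalkFrom src tgt u w l) :
    l.length < n := by
  simpa [walkVerts] using (h.nodup_walkVerts hG).length_le_card

theorem idxOf_walkVerts_le_length (hv : v ∈ walkVerts tgt u l) :
    (walkVerts tgt u l).idxOf v ≤ l.length := by
  have := List.idxOf_lt_length_iff.2 hv
  rw [show (walkVerts tgt u l).length = l.length + 1 by simp [walkVerts]] at this
  omega

end Walks

def listsOfLength (E : Type) [Fintype E] : ℕ → Finset (List E)
  | 0 => {[]}
  | m + 1 => (univ ×ˢ listsOfLength E m).map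
      ⟨fun p => p.1 :: p.2, fun p q h => by simpa [Prod.ext_iff] using h⟩

theorem mem_listsOfLength [Fintype E] {m : ℕ} {l : List E} :
    l ∈ listsOfLength E m ↔ l.length = m := by
  induction m generalizing l with
  | zero => simp [listsOfLength]
  | succ m ih =>
    cases l with
    | nil => simp [listsOfLength]
    | cons e l =>
      simp only [listsOfLength, mem_map, mem_product, mem_univ, true_and, Prod.exists,
        List.length_cons, Nat.add_right_cancel_iff, ← ih]
      exact ⟨fun ⟨_, _, hl, h⟩ => (List.cons.inj h).2 ▸ hl, fun hl => ⟨e, l, hl, rfl⟩⟩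

theorem pairwiseDisjoint_listsOfLength [Fintype E] (s : Set ℕ) :
    s.PairwiseDisjoint (listsOfLength E) := fun _ _ _ _ hne => disjoint_left.2 fun _ hl hl' =>
  hne ((mem_listsOfLength.1 hl).symm.trans (mem_listsOfLength.1 hl'))

def listsOfLengthLT (E : Type) [Fintype E] (N : ℕ) : Finset (List E) :=
  (range N).disjiUnion (listsOfLength E) (pairwiseDisjoint_listsOfLength _)

def swapMinMax {α : Type*} [LinearOrder α] (s : Finset α) : Equiv.Perm α :=
  if h : s.Nonempty then Equiv.swap (s.min' h) (s.max' h) else 1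

theorem support_swapMinMax_subset {α : Type*} [Fintype α] [LinearOrder α] (s : Finset α) :
    (swapMinMax s).support ⊆ s := by
  unfold swapMinMax
  split_ifs with h
  · intro x hx
    by_contra hxs
    refine Equiv.Perm.mem_support.1 hx (Equiv.swap_apply_of_ne_of_ne ?_ ?_) <;> rintro rfl
    exacts [hxs (s.min'_mem h), hxs (s.max'_mem h)]
  · simp

theorem swapMinMax_involutive {α : Type*} [LinearOrder α] (s : Finset α) :
    Function.Involutive (swapMinMax s) := by
  unfold swapMinMax
  split_ifs
  · exact Equiv.swap_apply_self _ _
  · exact fun _ => rfl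

theorem sign_swapMinMax {α : Type*} [Fintype α] [LinearOrder α] {s : Finset α} (hs : 1 < #s) :
    Equiv.Perm.sign (swapMinMax s) = -1 := by
  rw [swapMinMax, dif_pos (card_pos.1 (by omega))]
  exact Equiv.Perm.sign_swap (s.min'_lt_max'_of_card hs).ne

section TailSwap

variable (tgt : E → Fin n) (a : Fin k → Fin n)

def pathsThrough (P : Fin k → List E) (v : Fin n) : Finset (Fin k) :=
  {i | v ∈ walkVerts tgt (a i) (P i)}

def crossings (P : Fin k → List E) : Finset (Fin n) :=
  {v | 1 < #(pathsThrough tgt a P v)}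

theorem crossings_eq_empty_iff {P : Fin k → List E} :
    crossings tgt a P = ∅ ↔
      ∀ i j, i ≠ j → ∀ v ∈ walkVerts tgt (a i) (P i), v ∉ walkVerts tgt (a j) (P j) := by
  simp only [crossings, pathsThrough, filter_eq_empty_iff, mem_univ, true_implies, one_lt_card,
    mem_filter, true_and]
  grind

def visitIndex (P : Fin k → List E) (v : Fin n) (t : Fin k) : ℕ :=
  (walkVerts tgt (a t) (P t)).idxOf v

/-- For `τ t = t` this is `P t` again; allowing any `τ` makes the total weight and the multiset
of visited vertices invariant by reindexing along `τ`. -/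
def swapTails (P : Fin k → List E) (v : Fin n) (τ : Equiv.Perm (Fin k)) : Fin k → List E :=
  fun t => (P t).take (visitIndex tgt a P v t) ++ (P (τ t)).drop (visitIndex tgt a P v (τ t))

variable {tgt a} {P : Fin k → List E} {v : Fin n} {τ : Equiv.Perm (Fin k)}

theorem mem_walkVerts_of_apply_ne (hτ : τ.support ⊆ pathsThrough tgt a P v) {t : Fin k}
    (ht : τ t ≠ t) : v ∈ walkVerts tgt (a t) (P t) := by
  simpa [pathsThrough] using hτ (Equiv.Perm.mem_support.2 ht)

theorem swapTails_of_apply_eq {t : Fin k} (ht : τ t = t) : swapTails tgt a P v τ t = P t := by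
  simp [swapTails, ht]

theorem walkVerts_swapTails (t : Fin k) :
    walkVerts tgt (a t) (swapTails tgt a P v τ t) =
      (walkVerts tgt (a t) (P t)).take (visitIndex tgt a P v t + 1) ++
        (walkVerts tgt (a (τ t)) (P (τ t))).drop (visitIndex tgt a P v (τ t) + 1) := by
  simp [swapTails, walkVerts, List.map_take, List.map_drop]

theorem colWt_swapTails : colWt (swapTails tgt a P v τ) = colWt P := by
  simp only [colWt, swapTails, pathWt_append, prod_mul_distrib]
  rw [Equiv.prod_comp τ fun t => pathWt ((P t).drop (visitIndex tgt a P v t)), ← prod_mul_distrib]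
  simp [← pathWt_append]

theorem sum_walkVerts_swapTails :
    ∑ t, (walkVerts tgt (a t) (swapTails tgt a P v τ t) : Multiset (Fin n)) =
      ∑ t, (walkVerts tgt (a t) (P t) : Multiset (Fin n)) := by
  simp only [walkVerts_swapTails, ← Multiset.coe_add, sum_add_distrib]
  rw [Equiv.sum_comp τ fun t =>
    ((walkVerts tgt (a t) (P t)).drop (visitIndex tgt a P v t + 1) : Multiset (Fin n)),
    ← sum_add_distrib]
  simp [Multiset.coe_add]

theorem card_pathsThrough_eq_count (hP : ∀ t, (walkVerts tgt (a t) (P t)).Nodup) (w : Fin n) :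
    #(pathsThrough tgt a P w) = (∑ t, (walkVerts tgt (a t) (P t) : Multiset (Fin n))).count w := by
  rw [Multiset.count_sum', pathsThrough, card_filter]
  exact sum_congr rfl fun t _ => by rw [Multiset.coe_count, (hP t).count]

theorem mem_walkVerts_swapTails (hτ : τ.support ⊆ pathsThrough tgt a P v) (t : Fin k) :
    v ∈ walkVerts tgt (a t) (swapTails tgt a P v τ t) ↔ v ∈ walkVerts tgt (a t) (P t) := by
  by_cases ht : τ t = t
  · rw [swapTails_of_apply_eq ht]
  · have hv := mem_walkVerts_of_apply_ne hτ ht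
    simp only [hv, iff_true, walkVerts_swapTails]
    exact List.mem_append_left _ (List.mem_take_idxOf_succ hv)

theorem visitIndex_swapTails (hτ : τ.support ⊆ pathsThrough tgt a P v) (t : Fin k) :
    visitIndex tgt a (swapTails tgt a P v τ) v t = visitIndex tgt a P v t := by
  by_cases ht : τ t = t
  · rw [visitIndex, swapTails_of_apply_eq ht, visitIndex]
  · have hv := mem_walkVerts_of_apply_ne hτ ht
    rw [visitIndex, walkVerts_swapTails]
    unfold visitIndex
    rw [List.idxOf_append_of_mem (List.mem_take_idxOf_succ hv), List.idxOf_take_idxOf_succ]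

theorem swapTails_swapTails (hτ : τ.support ⊆ pathsThrough tgt a P v)
    (hinv : Function.Involutive τ) : swapTails tgt a (swapTails tgt a P v τ) v τ = P := by
  funext t
  by_cases ht : τ t = t
  · rw [swapTails_of_apply_eq ht, swapTails_of_apply_eq ht]
  have hmem : ∀ s, τ s ≠ s → visitIndex tgt a P v s ≤ (P s).length := fun _ hs =>
    idxOf_walkVerts_le_length (mem_walkVerts_of_apply_ne hτ hs)
  have hτt : τ (τ t) ≠ τ t := fun h => ht (τ.injective h)
  simp only [swapTails, visitIndex_swapTails hτ, hinv t]
  rw [List.take_left' (by simpa using hmem t ht), List.drop_left' (by simpa using hmem _ hτt),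
    List.take_append_drop]

variable {src : E → Fin n} {b : Fin k → Fin n} {σ : Equiv.Perm (Fin k)}

theorem TuplePaths.swapTails (hT : TuplePaths src tgt a b σ P)
    (hτ : τ.support ⊆ pathsThrough tgt a P v) :
    TuplePaths src tgt a b (σ * τ) (swapTails tgt a P v τ) := by
  intro t
  by_cases ht : τ t = t
  · rw [swapTails_of_apply_eq ht, Equiv.Perm.mul_apply, ht]
    exact hT t
  · have hτt : τ (τ t) ≠ τ t := fun h => ht (τ.injective h)
    exact ((hT t).take_drop_idxOf (mem_walkVerts_of_apply_ne hτ ht)).1.append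
      ((hT (τ t)).take_drop_idxOf (mem_walkVerts_of_apply_ne hτ hτt)).2

theorem crossings_swapTails (hG : IsAcyclic src tgt) (hT : TuplePaths src tgt a b σ P)
    (hτ : τ.support ⊆ pathsThrough tgt a P v) :
    crossings tgt a (swapTails tgt a P v τ) = crossings tgt a P := by
  have hP t := (hT t).nodup_walkVerts hG
  have hP' t := ((hT.swapTails hτ) t).nodup_walkVerts hG
  ext w
  simp only [crossings, mem_filter, mem_univ, true_and, card_pathsThrough_eq_count hP,
    card_pathsThrough_eq_count hP', sum_walkVerts_swapTails]

theorem pathsThrough_swapTails (hτ : τ.support ⊆ pathsThrough tgt a P v) :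
    pathsThrough tgt a (swapTails tgt a P v τ) v = pathsThrough tgt a P v := by
  ext t
  simp only [pathsThrough, mem_filter, mem_univ, true_and, mem_walkVerts_swapTails hτ]

variable (tgt a) in
def tailSwap (q : Equiv.Perm (Fin k) × (Fin k → List E)) :
    Equiv.Perm (Fin k) × (Fin k → List E) :=
  match (crossings tgt a q.2).min with
  | ⊤ => q
  | (v : Fin n) =>
    (q.1 * swapMinMax (pathsThrough tgt a q.2 v),
      swapTails tgt a q.2 v (swapMinMax (pathsThrough tgt a q.2 v)))

variable {q : Equiv.Perm (Fin k) × (Fin k → List E)}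

theorem tailSwap_of_min_eq_top (h : (crossings tgt a q.2).min = ⊤) : tailSwap tgt a q = q := by
  rw [tailSwap, h]

theorem tailSwap_of_min_eq_coe (h : (crossings tgt a q.2).min = v) :
    tailSwap tgt a q = (q.1 * swapMinMax (pathsThrough tgt a q.2 v),
      swapTails tgt a q.2 v (swapMinMax (pathsThrough tgt a q.2 v))) := by
  rw [tailSwap, h]

theorem colWt_tailSwap : colWt (tailSwap tgt a q).2 = colWt q.2 := by
  cases h : (crossings tgt a q.2).min with
  | top => rw [tailSwap_of_min_eq_top h]
  | coe v => rw [tailSwap_of_min_eq_coe h, colWt_swapTails]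

theorem sign_tailSwap (h : (crossings tgt a q.2).Nonempty) :
    Equiv.Perm.sign (tailSwap tgt a q).1 = -Equiv.Perm.sign q.1 := by
  obtain ⟨v, hv⟩ := min_of_nonempty h
  have hcard : 1 < #(pathsThrough tgt a q.2 v) := by
    simpa [crossings] using mem_of_min hv
  rw [tailSwap_of_min_eq_coe hv, Equiv.Perm.sign_mul, sign_swapMinMax hcard, mul_neg_one]

theorem TuplePaths.tailSwap (hT : TuplePaths src tgt a b q.1 q.2) :
    TuplePaths src tgt a b (tailSwap tgt a q).1 (tailSwap tgt a q).2 := by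
  cases h : (crossings tgt a q.2).min with
  | top => rwa [tailSwap_of_min_eq_top h]
  | coe v => rw [tailSwap_of_min_eq_coe h]; exact hT.swapTails (support_swapMinMax_subset _)

theorem crossings_tailSwap (hG : IsAcyclic src tgt) (hT : TuplePaths src tgt a b q.1 q.2) :
    crossings tgt a (tailSwap tgt a q).2 = crossings tgt a q.2 := by
  cases h : (crossings tgt a q.2).min with
  | top => rw [tailSwap_of_min_eq_top h]
  | coe v =>
    rw [tailSwap_of_min_eq_coe h]
    exact crossings_swapTails hG hT (support_swapMinMax_subset _)

theorem tailSwap_tailSwap (hG : IsAcyclic src tgt) (hT : TuplePaths src tgt a b q.1 q.2) :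
    tailSwap tgt a (tailSwap tgt a q) = q := by
  cases h : (crossings tgt a q.2).min with
  | top => rw [tailSwap_of_min_eq_top h, tailSwap_of_min_eq_top h]
  | coe v =>
    have hτ := support_swapMinMax_subset (pathsThrough tgt a q.2 v)
    have hinv := swapMinMax_involutive (pathsThrough tgt a q.2 v)
    have h' : (crossings tgt a (tailSwap tgt a q).2).min = v := by
      rw [crossings_tailSwap hG hT, h]
    rw [tailSwap_of_min_eq_coe h', tailSwap_of_min_eq_coe h]
    simp only [pathsThrough_swapTails hτ, swapTails_swapTails hτ hinv, mul_assoc]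
    rw [show swapMinMax (pathsThrough tgt a q.2 v) * swapMinMax (pathsThrough tgt a q.2 v) = 1 from
      Equiv.ext hinv, mul_one]

end TailSwap

section

variable [Fintype E]

theorem mem_listsOfLengthLT {N : ℕ} {l : List E} : l ∈ listsOfLengthLT E N ↔ l.length < N := by
  simp [listsOfLengthLT, mem_disjiUnion, mem_listsOfLength]

theorem sum_listsOfLength_succ {M : Type*} [AddCommMonoid M] (m : ℕ) (f : List E → M) :
    ∑ l ∈ listsOfLength E (m + 1), f l = ∑ e, ∑ l ∈ listsOfLength E m, f (e :: l) := by
  rw [listsOfLength, sum_map, sum_product]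
  rfl

open scoped Classical

variable (src tgt : E → Fin n)

theorem adjMat_pow_apply (m : ℕ) (i j : Fin n) :
    (adjMat src tgt ^ m) i j =
      ∑ l ∈ listsOfLength E m, if IsWalkFrom src tgt i j l then pathWt l else 0 := by
  induction m generalizing i with
  | zero => simp [listsOfLength, Matrix.one_apply, IsWalkFrom, pathWt]
  | succ m ih =>
    rw [pow_succ', Matrix.mul_apply, sum_listsOfLength_succ]
    simp only [adjMat, sum_mul, ite_mul, zero_mul]
    rw [sum_comm]
    refine sum_congr rfl fun e _ => ?_
    by_cases he : src e = i
    · simp [he, ih, IsWalkFrom, pathWt, mul_sum]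
    · simp [he, IsWalkFrom]

theorem adjMat_pow_eq_zero (hG : IsAcyclic src tgt) : adjMat src tgt ^ n = 0 := by
  refine Matrix.ext fun i j => ?_
  rw [adjMat_pow_apply, Matrix.zero_apply]
  exact Finset.sum_eq_zero fun l hl =>
    if_neg fun hw => (hw.length_lt hG).ne (mem_listsOfLength.1 hl)

theorem inv_one_sub_adjMat_apply (hG : IsAcyclic src tgt) (i j : Fin n) :
    (1 - adjMat src tgt)⁻¹ i j =
      ∑ l ∈ listsOfLengthLT E n, if IsWalkFrom src tgt i j l then pathWt l else 0 := by
  have hinv : (1 - adjMat src tgt)⁻¹ = ∑ m ∈ range n, adjMat src tgt ^ m :=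
    Matrix.inv_eq_left_inv (by rw [geom_sum_mul_neg, adjMat_pow_eq_zero src tgt hG, sub_zero])
  rw [hinv, Matrix.sum_apply, listsOfLengthLT, Finset.sum_disjiUnion]
  exact sum_congr rfl fun m _ => adjMat_pow_apply src tgt m i j

variable (a b : Fin k → Fin n)

def walkTuples : Finset (Equiv.Perm (Fin k) × (Fin k → List E)) :=
  {q ∈ univ ×ˢ Fintype.piFinset fun _ => listsOfLengthLT E n | TuplePaths src tgt a b q.1 q.2}

theorem mem_walkTuples (hG : IsAcyclic src tgt) {q : Equiv.Perm (Fin k) × (Fin k → List E)} :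
    q ∈ walkTuples src tgt a b ↔ TuplePaths src tgt a b q.1 q.2 := by
  simp only [walkTuples, mem_filter, mem_product, mem_univ, true_and, Fintype.mem_piFinset,
    mem_listsOfLengthLT, and_iff_right_iff_imp]
  exact fun hT i => IsWalkFrom.length_lt hG (hT i)

theorem det_submatrix_inv_one_sub_adjMat (hG : IsAcyclic src tgt) :
    (((1 - adjMat src tgt)⁻¹).submatrix a b).det =
      ∑ q ∈ walkTuples src tgt a b,
        ((Equiv.Perm.sign q.1 : ℤ) : MvPowerSeries E ℤ) * colWt q.2 := by
  rw [← Matrix.det_transpose, Matrix.det_apply', walkTuples, sum_filter, sum_product]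
  refine sum_congr rfl fun σ _ => ?_
  simp only [Matrix.transpose_apply, Matrix.submatrix_apply, inv_one_sub_adjMat_apply src tgt hG,
    prod_univ_sum, mul_sum]
  refine sum_congr rfl fun P _ => ?_
  rw [prod_ite_zero]
  simp only [TuplePaths, colWt, mem_univ, true_implies, mul_ite, mul_zero]
  congr

theorem sum_walkTuples_crossing_eq_zero (hG : IsAcyclic src tgt) :
    ∑ q ∈ walkTuples src tgt a b with (crossings tgt a q.2).Nonempty,
      ((Equiv.Perm.sign q.1 : ℤ) : MvPowerSeries E ℤ) * colWt q.2 = 0 := by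
  have hmem : ∀ q ∈ {q ∈ walkTuples src tgt a b | (crossings tgt a q.2).Nonempty},
      TuplePaths src tgt a b q.1 q.2 ∧ (crossings tgt a q.2).Nonempty := fun q hq =>
    let ⟨hq, hcross⟩ := mem_filter.1 hq
    ⟨(mem_walkTuples src tgt a b hG).1 hq, hcross⟩
  refine sum_involution (fun q _ => tailSwap tgt a q) (fun q hq => ?_) (fun q hq _ => ?_)
    (fun q hq => ?_) (fun q hq => tailSwap_tailSwap hG (hmem q hq).1)
  · rw [colWt_tailSwap, sign_tailSwap (hmem q hq).2]
    push_cast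
    ring
  · intro h
    exact units_ne_neg_self _ (by rw [← sign_tailSwap (hmem q hq).2, h])
  · obtain ⟨hT, hcross⟩ := hmem q hq
    exact mem_filter.2 ⟨(mem_walkTuples src tgt a b hG).2 hT.tailSwap,
      (crossings_tailSwap hG hT).symm ▸ hcross⟩

theorem isSystem_iff (hG : IsAcyclic src tgt) {q : Equiv.Perm (Fin k) × (Fin k → List E)} :
    IsSystem src tgt a b q.1 q.2 ↔
      q ∈ walkTuples src tgt a b ∧ ¬(crossings tgt a q.2).Nonempty := by
  rw [mem_walkTuples src tgt a b hG, not_nonempty_iff_eq_empty, crossings_eq_empty_iff]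
  exact ⟨fun h => ⟨h.1, h.2.2⟩, fun h => ⟨h.1, fun i => (h.1 i).nodup_walkVerts hG, h.2⟩⟩

end

variable [Fintype E]

theorem minor_eq_sum_disjoint_path_systems_of_acyclic_general (src tgt : E → Fin n)
    (hacyc : ∀ (v : Fin n) (l : List E), IsWalkFrom src tgt v v l → l = [])
    (a b : Fin k → Fin n) :
    {P : Equiv.Perm (Fin k) × (Fin k → List E) |
      IsSystem src tgt a b P.1 P.2}.Finite ∧
    (((1 - adjMat src tgt)⁻¹).submatrix a b).det =
      ∑ᶠ P ∈ {P : Equiv.Perm (Fin k) × (Fin k → List E) |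
          IsSystem src tgt a b P.1 P.2},
        ((Equiv.Perm.sign P.1 : ℤ) : MvPowerSeries E ℤ) * colWt P.2 := by
  classical
  have hsys : {P : Equiv.Perm (Fin k) × (Fin k → List E) | IsSystem src tgt a b P.1 P.2} =
      ↑{q ∈ walkTuples src tgt a b | ¬(crossings tgt a q.2).Nonempty} := by
    ext q
    simp [isSystem_iff src tgt a b hacyc]
  refine ⟨hsys ▸ finite_toSet _, ?_⟩
  rw [hsys, finsum_mem_coe_finset, det_submatrix_inv_one_sub_adjMat src tgt a b hacyc,
    ← sum_filter_add_sum_filter_not _ fun q => (crossings tgt a q.2).Nonempty,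
    sum_walkTuples_crossing_eq_zero src tgt a b hacyc, zero_add]

/-- Lindström–Gessel–Viennot. If the finite directed multigraph `G`
has no directed cycles, then every minor `Δ_{A,B}(M)` of the weighted path matrix
`M = (I - A)⁻¹` equals the (finite) signed sum over all collections of self-avoiding,
pairwise vertex-disjoint directed paths connecting `A` bijectively to `B`. -/
theorem minor_eq_sum_disjoint_path_systems_of_acyclic (src tgt : E → Fin n)
    (hacyc : ∀ (v : Fin n) (l : List E), IsWalkFrom src tgt v v l → l = [])
    (a b : Fin k → Fin n) (ha : Function.Injective a) (hb : Function.Injective b) :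
    {P : Equiv.Perm (Fin k) × (Fin k → List E) |
      IsSystem src tgt a b P.1 P.2}.Finite ∧
    (((1 - adjMat src tgt)⁻¹).submatrix a b).det =
      ∑ᶠ P ∈ {P : Equiv.Perm (Fin k) × (Fin k → List E) |
          IsSystem src tgt a b P.1 P.2},
        ((Equiv.Perm.sign P.1 : ℤ) : MvPowerSeries E ℤ) * colWt P.2 :=
  minor_eq_sum_disjoint_path_systems_of_acyclic_general src tgt hacyc a b

end PathMatrix
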